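/- arXiv:1109.5386 — 2 statements merged into one kernel-verified Lean document; each statement's English description precedes it below -/
import Mathlib

section
/- For all z, w in the open unit disk 𝔻 ⊂ ℂ, ∫_{0}^{2π} (1 − |z|²)(1 − |w|²) / (|e^{iθ} − z|² · |e^{iθ} − w|²) dθ = 2π · (1 − |z·w|²) / |1 − z·conj(w)|². Consequently, Hadamard's variational formula is verified on the unit disk: the radial variation −(1/(2π))·(1 − |zw|²)/|1 − z·conj(w)|² of the Green function equals minus the boundary integral of the product of the two Poisson kernels P(z,θ) = (1/(2π))(1 − |z|²)/|e^{iθ} − z|² and P(w,θ), multiplied by 2π. -/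
/-!
On the unit circle the Poisson kernel `(1 - |w|²)/|ζ - w|²` is the real part of
`F_w(ζ) = (1 + ζ w̄)/(1 - ζ w̄)`, which is holomorphic on a neighbourhood of the closed disk.
Hence the integral is the Poisson integral at `z` of the harmonic function `Re F_w`, i.e.
`2π Re F_w(z) = 2π (1 - |zw|²)/|1 - z w̄|²`.
-/

open ComplexConjugate

/-- The Poisson kernel of the unit disk at `z ∈ 𝔻` and boundary point `e^{iθ}`. -/
noncomputable def poissonKernelDisk (z : ℂ) (θ : ℝ) : ℝ :=
  (1 / (2 * Real.pi)) *
    ((1 - ‖z‖ ^ 2) / ‖Complex.exp (θ * Complex.I) - z‖ ^ 2)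

open Complex Metric Real InnerProductSpace

theorem InnerProductSpace.HarmonicContOnCl.integral_poissonKernel_mul {f : ℂ → ℝ}
    (hf : HarmonicContOnCl f (ball 0 1)) {z : ℂ} (hz : z ∈ ball (0 : ℂ) 1) :
    ∫ θ in (0 : ℝ)..2 * π, (1 - ‖z‖ ^ 2) / ‖exp (θ * I) - z‖ ^ 2 * f (exp (θ * I)) =
      2 * π * f z := by
  have h := hf.circleAverage_poissonKernel_smul hz
  rw [circleAverage_def, inv_smul_eq_iff₀ (by positivity)] at h
  simpa [poissonKernel_def, circleMap_zero] using h

theorem re_one_add_div_one_sub (a : ℂ) :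
    ((1 + a) / (1 - a)).re = (1 - ‖a‖ ^ 2) / ‖1 - a‖ ^ 2 := by
  simpa [herglotzRieszKernel_def, poissonKernel_def] using
    (congrFun (poissonKernel_eq_re_herglotzRieszKernel (c := 0) (w := a)) 1).symm

theorem norm_one_sub_mul_conj {ζ : ℂ} (hζ : ‖ζ‖ = 1) (w : ℂ) :
    ‖1 - ζ * conj w‖ = ‖ζ - w‖ := by
  have hζ' : conj ζ * ζ = 1 := by
    rw [mul_comm, mul_conj, normSq_eq_norm_sq, hζ, one_pow, ofReal_one]
  calc ‖1 - ζ * conj w‖ = ‖conj ζ * (ζ - w)‖ := by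
        rw [← norm_conj, map_sub, map_one, map_mul, conj_conj]
        congr 1
        linear_combination -hζ'
    _ = ‖ζ - w‖ := by rw [norm_mul, norm_conj, hζ, one_mul]

theorem re_one_add_div_one_sub_mul_conj {ζ : ℂ} (hζ : ‖ζ‖ = 1) (w : ℂ) :
    ((1 + ζ * conj w) / (1 - ζ * conj w)).re = (1 - ‖w‖ ^ 2) / ‖ζ - w‖ ^ 2 := by
  rw [re_one_add_div_one_sub, norm_one_sub_mul_conj hζ, norm_mul, norm_conj, hζ, one_mul]

theorem harmonicContOnCl_re_one_add_div_one_sub_mul_conj {w : ℂ} (hw : ‖w‖ < 1) :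
    HarmonicContOnCl (fun ζ ↦ ((1 + ζ * conj w) / (1 - ζ * conj w)).re) (ball 0 1) := by
  refine HarmonicOnNhd.harmonicContOnCl fun ζ hζ ↦ ?_
  rw [closure_ball 0 one_ne_zero, mem_closedBall_zero_iff] at hζ
  have hden : 1 - ζ * conj w ≠ 0 := by
    have hlt : ‖ζ * conj w‖ < 1 := by
      rw [norm_mul, norm_conj]
      exact mul_lt_one_of_nonneg_of_lt_one_right hζ (norm_nonneg _) hw
    exact sub_ne_zero.2 fun h ↦ by simp [← h] at hlt
  have hF : AnalyticAt ℂ (fun ζ ↦ (1 + ζ * conj w) / (1 - ζ * conj w)) ζ := by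
    fun_prop (disch := exact hden)
  exact hF.harmonicAt_re

/-- For `z, w ∈ 𝔻`,
`∫₀^{2π} (1−|z|²)(1−|w|²)/(|e^{iθ}−z|²|e^{iθ}−w|²) dθ = 2π (1−|zw|²)/|1−z·conj w|²`.
Consequently Hadamard's variational formula is verified on the unit disk: the radial
variation `−(1/(2π))(1−|zw|²)/|1−z·conj w|²` of the Green function equals minus the
boundary integral of the product of the two Poisson kernels. -/
theorem hadamard_disk_verification (z w : ℂ) (hz : z ∈ Metric.ball (0 : ℂ) 1)
    (hw : w ∈ Metric.ball (0 : ℂ) 1) :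
    (∫ θ in (0:ℝ)..(2 * Real.pi),
        ((1 - ‖z‖ ^ 2) * (1 - ‖w‖ ^ 2)) /
          (‖Complex.exp (θ * Complex.I) - z‖ ^ 2 *
            ‖Complex.exp (θ * Complex.I) - w‖ ^ 2)) =
      2 * Real.pi * ((1 - ‖z * w‖ ^ 2) / ‖1 - z * conj w‖ ^ 2) ∧
    -((1 / (2 * Real.pi)) *
        ((1 - ‖z * w‖ ^ 2) / ‖1 - z * conj w‖ ^ 2)) =
      -(∫ θ in (0:ℝ)..(2 * Real.pi), poissonKernelDisk z θ * poissonKernelDisk w θ) := by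
  have hF := harmonicContOnCl_re_one_add_div_one_sub_mul_conj (mem_ball_zero_iff.1 hw)
  have hint : (∫ θ in (0:ℝ)..(2 * π), ((1 - ‖z‖ ^ 2) * (1 - ‖w‖ ^ 2)) /
      (‖exp (θ * I) - z‖ ^ 2 * ‖exp (θ * I) - w‖ ^ 2)) =
        2 * π * ((1 - ‖z * w‖ ^ 2) / ‖1 - z * conj w‖ ^ 2) := by
    calc _ = ∫ θ in (0:ℝ)..(2 * π), (1 - ‖z‖ ^ 2) / ‖exp (θ * I) - z‖ ^ 2 *
          ((1 + exp (θ * I) * conj w) / (1 - exp (θ * I) * conj w)).re := by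
          refine intervalIntegral.integral_congr fun θ _ ↦ ?_
          rw [re_one_add_div_one_sub_mul_conj (norm_exp_ofReal_mul_I θ), mul_div_mul_comm]
      _ = 2 * π * ((1 + z * conj w) / (1 - z * conj w)).re := hF.integral_poissonKernel_mul hz
      _ = _ := by rw [re_one_add_div_one_sub, norm_mul z, norm_mul z, norm_conj]
  refine ⟨hint, neg_inj.2 ?_⟩
  calc 1 / (2 * π) * ((1 - ‖z * w‖ ^ 2) / ‖1 - z * conj w‖ ^ 2)
      = (1 / (2 * π)) ^ 2 * ∫ θ in (0:ℝ)..(2 * π), ((1 - ‖z‖ ^ 2) * (1 - ‖w‖ ^ 2)) /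
          (‖exp (θ * I) - z‖ ^ 2 * ‖exp (θ * I) - w‖ ^ 2) := by
        rw [hint]
        field_simp
    _ = _ := by
        rw [← intervalIntegral.integral_const_mul]
        refine intervalIntegral.integral_congr fun θ _ ↦ ?_
        simp only [poissonKernelDisk]
        ring
end

section
/- For all nonzero z, w in the open unit disk 𝔻 ⊂ ℂ, the Lebesgue area integral over 𝔻 of the function ξ ↦ 1/((1 − ξ·conj(w))·(1 − conj(ξ)·z)) equals −(π/(z·conj(w))) · log(1 − z·conj(w)), where log is the principal branch of the complex logarithm. -/
open ComplexConjugate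

/-!
In polar coordinates the area integral becomes `∫₀¹ 2πr · A(r) dr`, where `A(r)` is the average
of the kernel over the circle of radius `r`. On that circle `conj ξ = r² / ξ`, so the kernel is the
Cauchy kernel `ξ / (ξ - r² z)` times the holomorphic function `(1 - ξ conj w)⁻¹`, and the mean value
property gives `A(r) = (1 - r² z conj w)⁻¹`. With `a = z conj w`, the radial integrand
`2πr / (1 - r² a)` has antiderivative `-(π / a) log (1 - r² a)`; the principal logarithm is
differentiable along the way because `1 - r² a` stays in the right half-plane.
-/

open Set MeasureTheory Metric Real

theorem one_sub_mul_ne_zero_of_norm_mul_lt_one {R : Type*} [NormedRing R] [NormOneClass R]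
    {u v : R} (h : ‖u‖ * ‖v‖ < 1) : 1 - u * v ≠ 0 := by
  rw [sub_ne_zero]
  intro huv
  have := (norm_mul_le u v).trans_lt h
  rw [← huv, norm_one] at this
  exact this.false

theorem polarCoord_symm_eq_circleMap (r θ : ℝ) :
    Complex.polarCoord.symm (r, θ) = circleMap 0 r θ := by
  simp [circleMap, Complex.exp_mul_I, Complex.ofReal_cos, Complex.ofReal_sin]

theorem integral_Ioo_neg_pi_pi_eq_circleAverage {E : Type*} [NormedAddCommGroup E]
    [NormedSpace ℝ E] (f : ℂ → E) (c : ℂ) (R : ℝ) :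
    ∫ θ in Ioo (-π) π, f (circleMap c R θ) = (2 * π) • circleAverage f c R := by
  rw [circleAverage_eq_integral_add (-π), smul_inv_smul₀ (by positivity),
    intervalIntegral.integral_comp_add_right (fun θ ↦ f (circleMap c R θ)),
    intervalIntegral.integral_of_le (by linarith [pi_pos]), integral_Ioc_eq_integral_Ioo]
  ring_nf

theorem integral_ball_zero_eq_integral_circleAverage {E : Type*} [NormedAddCommGroup E]
    [NormedSpace ℝ E] {f : ℂ → E} {R : ℝ} (hf : ContinuousOn f (closedBall 0 R)) :
    ∫ ξ in ball (0 : ℂ) R, f ξ = ∫ r in Ioo 0 R, (2 * π * r) • circleAverage f 0 r := by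
  set g : ℝ × ℝ → ℂ := ⇑Complex.polarCoord.symm
  have hg : Continuous g := by
    rw [show g = _ from funext Complex.polarCoord_symm_apply]
    fun_prop
  have hpreimage : Complex.polarCoord.target ∩ g ⁻¹' ball 0 R = Ioo 0 R ×ˢ Ioo (-π) π := by
    ext ⟨r, θ⟩
    simp only [Complex.polarCoord_target, mem_inter_iff, mem_prod, mem_Ioi, mem_preimage,
      mem_ball_zero_iff, Complex.norm_polarCoord_symm, g, mem_Ioo]
    constructor
    · rintro ⟨⟨hr, hθ⟩, hrR⟩
      exact ⟨⟨hr, abs_of_pos hr ▸ hrR⟩, hθ⟩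
    · rintro ⟨⟨hr, hrR⟩, hθ⟩
      exact ⟨⟨hr, hθ⟩, (abs_of_pos hr).symm ▸ hrR⟩
  have hpolar : ∫ ξ in ball (0 : ℂ) R, f ξ = ∫ p in Ioo 0 R ×ˢ Ioo (-π) π, p.1 • f (g p) := by
    rw [← integral_indicator measurableSet_ball, ← Complex.integral_comp_polarCoord_symm,
      ← hpreimage, ← setIntegral_indicator (measurableSet_ball.preimage hg.measurable)]
    congr 1 with p
    by_cases hp : g p ∈ ball 0 R
    · rw [indicator_of_mem hp, indicator_of_mem (mem_preimage.2 hp)]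
    · rw [indicator_of_notMem hp, indicator_of_notMem (mt mem_preimage.1 hp), smul_zero]
  have hint : IntegrableOn (fun p : ℝ × ℝ ↦ p.1 • f (g p)) (Ioo 0 R ×ˢ Ioo (-π) π) := by
    refine ContinuousOn.integrableOn_compact (isCompact_Icc.prod isCompact_Icc) ?_
      |>.mono_set (prod_mono Ioo_subset_Icc_self Ioo_subset_Icc_self)
    refine continuousOn_fst.smul (hf.comp hg.continuousOn ?_)
    rintro ⟨r, θ⟩ ⟨⟨hr, hrR⟩, -⟩
    simpa [g, abs_of_nonneg hr] using hrR
  rw [hpolar, Measure.volume_eq_prod, setIntegral_prod _ hint]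
  refine setIntegral_congr_fun measurableSet_Ioo fun r _ ↦ ?_
  simp only [polarCoord_symm_eq_circleMap, g, integral_smul,
    integral_Ioo_neg_pi_pi_eq_circleAverage, smul_smul]
  ring_nf

theorem circleAverage_inv_one_sub_conj_mul_smul {E : Type*} [NormedAddCommGroup E]
    [NormedSpace ℂ E] [CompleteSpace E] {g : ℂ → E} {r : ℝ} {z : ℂ}
    (hg : DiffContOnCl ℂ g (ball 0 |r|)) (hz : |r| * ‖z‖ < 1) :
    circleAverage (fun ξ ↦ (1 - conj ξ * z)⁻¹ • g ξ) 0 r = g ((r : ℂ) ^ 2 * z) := by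
  rcases eq_or_ne r 0 with rfl | hr
  · simp
  have hmem : (r : ℂ) ^ 2 * z ∈ ball 0 |r| := by
    rw [mem_ball_zero_iff, norm_mul, norm_pow, Complex.norm_real, Real.norm_eq_abs, sq, mul_assoc]
    exact mul_lt_of_lt_one_right (abs_pos.2 hr) hz
  rw [← hg.circleAverage_smul_div hmem]
  refine circleAverage_congr_sphere fun ξ hξ ↦ ?_
  rw [mem_sphere_zero_iff_norm] at hξ
  have hξ0 : ξ ≠ 0 := norm_pos_iff.1 (hξ ▸ abs_pos.2 hr)
  have hfactor : ξ - (r : ℂ) ^ 2 * z = ξ * (1 - conj ξ * z) := by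
    rw [mul_sub, ← mul_assoc, Complex.mul_conj', hξ, mul_one]
    norm_cast
    rw [sq_abs]
  simp only [sub_zero, hfactor, div_mul_cancel_left₀ hξ0]

theorem circleAverage_one_div_one_sub_mul_conj_mul_one_sub_conj_mul {r : ℝ} {z w : ℂ}
    (hz : |r| * ‖z‖ < 1) (hw : |r| * ‖w‖ < 1) :
    circleAverage (fun ξ ↦ 1 / ((1 - ξ * conj w) * (1 - conj ξ * z))) 0 r =
      (1 - (r : ℂ) ^ 2 * (z * conj w))⁻¹ := by
  have hg : DifferentiableOn ℂ (fun ξ ↦ (1 - ξ * conj w)⁻¹) (closedBall 0 |r|) := by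
    refine DifferentiableOn.inv (by fun_prop) fun ξ hξ ↦ one_sub_mul_ne_zero_of_norm_mul_lt_one ?_
    rw [Complex.norm_conj]
    exact (mul_le_mul_of_nonneg_right (mem_closedBall_zero_iff.1 hξ) (norm_nonneg w)).trans_lt hw
  rw [← mul_assoc, ← circleAverage_inv_one_sub_conj_mul_smul
    (hg.mono closure_ball_subset_closedBall).diffContOnCl hz]
  congr with ξ
  rw [one_div, mul_inv, smul_eq_mul, mul_comm]

theorem integral_Ioo_zero_one_smul_inv_one_sub_sq_mul {a : ℂ} (ha : ‖a‖ < 1) (ha0 : a ≠ 0) :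
    ∫ r in Ioo (0 : ℝ) 1, (2 * π * r) • (1 - (r : ℂ) ^ 2 * a)⁻¹ =
      -(π / a) * Complex.log (1 - a) := by
  have hslit : ∀ r ∈ uIcc (0 : ℝ) 1, 1 - (r : ℂ) ^ 2 * a ∈ Complex.slitPlane := by
    intro r hr
    rw [uIcc_of_le zero_le_one] at hr
    rw [sub_eq_add_neg]
    refine Complex.mem_slitPlane_of_norm_lt_one ?_
    rw [norm_neg, norm_mul, norm_pow, Complex.norm_real, Real.norm_eq_abs, sq_abs]
    exact mul_lt_one_of_nonneg_of_lt_one_right (pow_le_one₀ hr.1 hr.2) (norm_nonneg a) ha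
  have hderiv : ∀ r ∈ uIcc (0 : ℝ) 1,
      HasDerivAt (fun s : ℝ ↦ -(π / a) * Complex.log (1 - (s : ℂ) ^ 2 * a))
        ((2 * π * r) • (1 - (r : ℂ) ^ 2 * a)⁻¹) r := by
    intro r hr
    have hinner : HasDerivAt (fun s : ℂ ↦ 1 - s ^ 2 * a) (-(2 * r * a)) r := by
      simpa using ((hasDerivAt_pow 2 (r : ℂ)).mul_const a).const_sub 1
    refine (((Complex.hasDerivAt_log (hslit r hr)).comp (r : ℂ) hinner).const_mul
      (-(π / a) : ℂ)).comp_ofReal.congr_deriv ?_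
    rw [Complex.real_smul]
    field_simp
    push_cast
    ring
  rw [← integral_Ioc_eq_integral_Ioo, ← intervalIntegral.integral_of_le zero_le_one,
    intervalIntegral.integral_eq_sub_of_hasDerivAt hderiv]
  · simp
  · exact ContinuousOn.intervalIntegrable <| (continuous_const.mul continuous_id).continuousOn.smul
      (ContinuousOn.inv₀ (by fun_prop) fun r hr ↦ Complex.slitPlane_ne_zero (hslit r hr))

/-- For nonzero `z, w` in the open unit disk,
`∫_𝔻 1/((1 − ξ·conj w)(1 − conj(ξ)·z)) dA(ξ) = −(π/(z·conj w)) log(1 − z·conj w)`,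
with the principal branch of the logarithm. -/
theorem area_integral_szego_type (z w : ℂ) (hz : z ∈ Metric.ball (0 : ℂ) 1)
    (hw : w ∈ Metric.ball (0 : ℂ) 1) (hz0 : z ≠ 0) (hw0 : w ≠ 0) :
    (∫ ξ in Metric.ball (0 : ℂ) 1, 1 / ((1 - ξ * conj w) * (1 - conj ξ * z))) =
      -((Real.pi : ℂ) / (z * conj w)) * Complex.log (1 - z * conj w) := by
  have hz1 : ‖z‖ < 1 := mem_ball_zero_iff.1 hz
  have hw1 : ‖conj w‖ < 1 := by rwa [Complex.norm_conj, ← mem_ball_zero_iff]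
  have hkernel : ContinuousOn (fun ξ ↦ 1 / ((1 - ξ * conj w) * (1 - conj ξ * z)))
      (closedBall 0 1) := by
    refine continuousOn_const.div (by fun_prop) fun ξ hξ ↦ ?_
    have hξ : ‖ξ‖ ≤ 1 := mem_closedBall_zero_iff.1 hξ
    refine mul_ne_zero (one_sub_mul_ne_zero_of_norm_mul_lt_one ?_)
      (one_sub_mul_ne_zero_of_norm_mul_lt_one ?_)
    · exact mul_lt_one_of_nonneg_of_lt_one_right hξ (norm_nonneg _) hw1
    · exact mul_lt_one_of_nonneg_of_lt_one_right (by rwa [Complex.norm_conj]) (norm_nonneg _) hz1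
  have hzw : ‖z * conj w‖ < 1 := (norm_mul_le _ _).trans_lt
    (mul_lt_one_of_nonneg_of_lt_one_right hz1.le (norm_nonneg _) hw1)
  rw [integral_ball_zero_eq_integral_circleAverage hkernel,
    ← integral_Ioo_zero_one_smul_inv_one_sub_sq_mul hzw
      (mul_ne_zero hz0 ((map_ne_zero _).2 hw0))]
  refine setIntegral_congr_fun measurableSet_Ioo fun r hr ↦ ?_
  have hr1 : |r| < 1 := abs_lt.2 ⟨by linarith [hr.1], hr.2⟩
  rw [circleAverage_one_div_one_sub_mul_conj_mul_one_sub_conj_mul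
    (mul_lt_one_of_nonneg_of_lt_one_left (abs_nonneg r) hr1 hz1.le)
    (mul_lt_one_of_nonneg_of_lt_one_left (abs_nonneg r) hr1 (mem_ball_zero_iff.1 hw).le)]
end
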